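/- arXiv:1907.08697 — 2 statements merged into one kernel-verified Lean document; each statement's English description precedes it below -/
import Mathlib

section
/- Let U be a real orthogonal d×d matrix and let r be an integer with 1 ≤ r ≤ d. Then there exists a matrix Ū which is a product of g = r(2d − r − 1)/2 Givens rotations and one diagonal matrix with diagonal entries in {+1, −1}, such that ‖U − Ū‖_F² ≤ 2(d − r). -/
open Matrix

/-- Squared Frobenius norm of a real matrix. -/
def frobSq {m n : ℕ} (A : Matrix (Fin m) (Fin n) ℝ) : ℝ := ∑ i, ∑ j, (A i j) ^ 2

/-- The singular values of a real square matrix `A`: the square roots of the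
eigenvalues of `AᵀA` (here `Aᴴ = Aᵀ` since the matrix is real). -/
noncomputable def singVals {n : ℕ} (A : Matrix (Fin n) (Fin n) ℝ) : Fin n → ℝ :=
  fun i => Real.sqrt ((Matrix.isHermitian_conjTranspose_mul_self A).eigenvalues i)

/-- The nuclear norm of a real square matrix: the sum of its singular values. -/
noncomputable def nuclearNorm {n : ℕ} (A : Matrix (Fin n) (Fin n) ℝ) : ℝ :=
  ∑ i, singVals A i

/-- The 2×2 submatrix `Z_{⟨i,j⟩} = [[Z_ii, Z_ij],[Z_ji, Z_jj]]`. -/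
def sub2 {d : ℕ} (Z : Matrix (Fin d) (Fin d) ℝ) (i j : Fin d) : Matrix (Fin 2) (Fin 2) ℝ :=
  !![Z i i, Z i j; Z j i, Z j j]

/-- The score `C_ij(Z) = ‖Z_{⟨i,j⟩}‖_* − tr(Z_{⟨i,j⟩})`. -/
noncomputable def score {d : ℕ} (Z : Matrix (Fin d) (Fin d) ℝ) (i j : Fin d) : ℝ :=
  nuclearNorm (sub2 Z i j) - (sub2 Z i j).trace

/-- An extended orthogonal Givens transformation on indices `i < j`: equal to the identity
except for the 2×2 block on rows/columns `i, j`, which is either a rotation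
`[[c, −s],[s, c]]` or a reflection `[[c, s],[s, −c]]` with `c² + s² = 1`. -/
def IsExtGivens {d : ℕ} (i j : Fin d) (G : Matrix (Fin d) (Fin d) ℝ) : Prop :=
  (∃ c s : ℝ, c ^ 2 + s ^ 2 = 1 ∧
    ((G i i = c ∧ G i j = -s ∧ G j i = s ∧ G j j = c) ∨
     (G i i = c ∧ G i j = s ∧ G j i = s ∧ G j j = -c))) ∧
  (∀ k, k ≠ i → k ≠ j → G k k = 1) ∧
  (∀ k l, k ≠ l → ¬(k = i ∧ l = j) → ¬(k = j ∧ l = i) → G k l = 0)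

/-- A Givens rotation on indices `i < j`. -/
def IsGivensRotation {d : ℕ} (i j : Fin d) (G : Matrix (Fin d) (Fin d) ℝ) : Prop :=
  (∃ c s : ℝ, c ^ 2 + s ^ 2 = 1 ∧
    G i i = c ∧ G i j = -s ∧ G j i = s ∧ G j j = c) ∧
  (∀ k, k ≠ i → k ≠ j → G k k = 1) ∧
  (∀ k l, k ≠ l → ¬(k = i ∧ l = j) → ¬(k = j ∧ l = i) → G k l = 0)

/-- The squared off-diagonal "norm" `off(M)² = Σ_{t≠q} M_tq²`. -/
def offSq {d : ℕ} (M : Matrix (Fin d) (Fin d) ℝ) : ℝ :=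
  ∑ t, ∑ q, if t ≠ q then (M t q) ^ 2 else 0

/-!
Givens rotations in the planes `(m, t)`, `t > m`, clear column `m` below the diagonal without
disturbing the earlier, already cleared columns; doing this for the first `r` columns costs
`∑_{m<r} (d - 1 - m) = r(2d - r - 1)/2` rotations and writes `U = P W` with `P` a product of
rotations and `W` orthogonal with its first `r` columns upper triangular. Orthogonality forces
these columns to be `± eₘ`. For `D` the diagonal of signs of `W`,
`‖U - P D‖² = ‖W - D‖² = 2d - 2 ∑ₜ |W t t| ≤ 2(d - r)`.
-/

def givens {d : ℕ} (i j : Fin d) (c s : ℝ) : Matrix (Fin d) (Fin d) ℝ :=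
  of fun k l =>
    if k = i ∧ l = i then c else if k = i ∧ l = j then -s
    else if k = j ∧ l = i then s else if k = j ∧ l = j then c
    else if k = l then 1 else 0

section Givens

variable {d : ℕ} {i j : Fin d} {c s : ℝ}

theorem isGivensRotation_givens (hij : i ≠ j) (h : c ^ 2 + s ^ 2 = 1) :
    IsGivensRotation i j (givens i j c s) := by
  refine ⟨⟨c, s, h, ?_, ?_, ?_, ?_⟩, fun k hki hkj => ?_, fun k l hkl h₁ h₂ => ?_⟩ <;>
    simp_all [givens, Ne.symm hij]
  split_ifs <;> simp_all

theorem IsGivensRotation.eq_givens {G : Matrix (Fin d) (Fin d) ℝ} (hG : IsGivensRotation i j G) :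
    ∃ c s, c ^ 2 + s ^ 2 = 1 ∧ G = givens i j c s := by
  obtain ⟨⟨c, s, hcs, hii, hij, hji, hjj⟩, hdiag, hoff⟩ := hG
  refine ⟨c, s, hcs, ?_⟩
  ext k l
  simp only [givens, of_apply]
  split_ifs with h₁ h₂ h₃ h₄ h₅
  · rw [h₁.1, h₁.2, hii]
  · rw [h₂.1, h₂.2, hij]
  · rw [h₃.1, h₃.2, hji]
  · rw [h₄.1, h₄.2, hjj]
  · subst h₅
    exact hdiag k (by tauto) (by tauto)
  · exact hoff k l h₅ h₂ h₃

theorem givens_mul_apply_left (hij : i ≠ j) (V : Matrix (Fin d) (Fin d) ℝ) (q : Fin d) :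
    (givens i j c s * V) i q = c * V i q - s * V j q := by
  rw [mul_apply, Fintype.sum_eq_add i j hij fun m hm => by simp [givens, hm.1, hm.2, Ne.symm hm.1]]
  simp [givens, Ne.symm hij, sub_eq_add_neg]

theorem givens_mul_apply_right (hij : i ≠ j) (V : Matrix (Fin d) (Fin d) ℝ) (q : Fin d) :
    (givens i j c s * V) j q = s * V i q + c * V j q := by
  rw [mul_apply, Fintype.sum_eq_add i j hij fun m hm => by simp [givens, hm.1, hm.2, Ne.symm hm.2]]
  simp [givens, hij, Ne.symm hij]

theorem givens_mul_apply_of_ne {t : Fin d} (hti : t ≠ i) (htj : t ≠ j)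
    (V : Matrix (Fin d) (Fin d) ℝ) (q : Fin d) : (givens i j c s * V) t q = V t q := by
  simp [givens, mul_apply, hti, htj]

theorem givens_transpose (hij : i ≠ j) : (givens i j c s)ᵀ = givens i j c (-s) := by
  ext k l
  simp only [transpose_apply, givens, of_apply]
  split_ifs <;> grind

theorem givens_transpose_mul_self (hij : i ≠ j) (h : c ^ 2 + s ^ 2 = 1) :
    (givens i j c s)ᵀ * givens i j c s = 1 := by
  rw [givens_transpose hij]
  ext t q
  by_cases hti : t = i
  · subst hti
    rw [givens_mul_apply_left hij]
    simp only [givens, of_apply, one_apply]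
    split_ifs <;> grind
  by_cases htj : t = j
  · subst htj
    rw [givens_mul_apply_right hij]
    simp only [givens, of_apply, one_apply]
    split_ifs <;> grind
  · rw [givens_mul_apply_of_ne hti htj]
    simp only [givens, of_apply, one_apply]
    split_ifs <;> grind

theorem IsGivensRotation.transpose_mul_self {G : Matrix (Fin d) (Fin d) ℝ} (hij : i ≠ j)
    (hG : IsGivensRotation i j G) : Gᵀ * G = 1 := by
  obtain ⟨c, s, hcs, rfl⟩ := hG.eq_givens
  exact givens_transpose_mul_self hij hcs

/-- Rotating the plane `(i, j)` by the argument of `V i i + V j i * I` annihilates `V j i`. -/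
theorem exists_givens_mul_apply_eq_zero (hij : i ≠ j) (V : Matrix (Fin d) (Fin d) ℝ) :
    ∃ c s, c ^ 2 + s ^ 2 = 1 ∧ (givens i j c s * V) j i = 0 := by
  set z : ℂ := ⟨V i i, V j i⟩
  refine ⟨Real.cos z.arg, -Real.sin z.arg, by rw [neg_sq, Real.cos_sq_add_sin_sq], ?_⟩
  rw [givens_mul_apply_right hij]
  have hre : ‖z‖ * Real.cos z.arg = V i i := Complex.norm_mul_cos_arg z
  have him : ‖z‖ * Real.sin z.arg = V j i := Complex.norm_mul_sin_arg z
  rw [← hre, ← him]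
  ring

end Givens

def IsGivensProduct {d : ℕ} (n : ℕ) (P : Matrix (Fin d) (Fin d) ℝ) : Prop :=
  ∃ J : Fin n → Matrix (Fin d) (Fin d) ℝ,
    (∀ k, ∃ i j : Fin d, i < j ∧ IsGivensRotation i j (J k)) ∧ (List.ofFn J).prod = P

namespace IsGivensProduct

variable {d m n : ℕ} {P Q : Matrix (Fin d) (Fin d) ℝ}

theorem one : IsGivensProduct 0 (1 : Matrix (Fin d) (Fin d) ℝ) :=
  ⟨Fin.elim0, fun k => k.elim0, by simp⟩

theorem of_isGivensRotation {i j : Fin d} (hij : i < j) (hP : IsGivensRotation i j P) :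
    IsGivensProduct 1 P :=
  ⟨fun _ => P, fun _ => ⟨i, j, hij, hP⟩, by simp⟩

theorem mul (hP : IsGivensProduct m P) (hQ : IsGivensProduct n Q) :
    IsGivensProduct (m + n) (P * Q) := by
  obtain ⟨J₁, hJ₁, rfl⟩ := hP
  obtain ⟨J₂, hJ₂, rfl⟩ := hQ
  refine ⟨Fin.append J₁ J₂, fun k => ?_, by rw [List.ofFn_fin_append, List.prod_append]⟩
  refine Fin.addCases (fun k => ?_) (fun k => ?_) k
  · simpa only [Fin.append_left] using hJ₁ k
  · simpa only [Fin.append_right] using hJ₂ k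

theorem transpose_mul_self (hP : IsGivensProduct n P) : Pᵀ * P = 1 := by
  obtain ⟨J, hJ, rfl⟩ := hP
  rw [← mem_orthogonalGroup_iff']
  refine list_prod_mem fun G hG => ?_
  obtain ⟨k, rfl⟩ := List.mem_ofFn.mp hG
  obtain ⟨i, j, hij, hG⟩ := hJ k
  exact (mem_orthogonalGroup_iff' _ _).mpr (hG.transpose_mul_self hij.ne)

end IsGivensProduct

def FirstColumnsUpperTriangular {d : ℕ} (r : ℕ) (W : Matrix (Fin d) (Fin d) ℝ) : Prop :=
  ∀ t q : Fin d, (q : ℕ) < r → q < t → W t q = 0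

namespace FirstColumnsUpperTriangular

variable {d r : ℕ} {W : Matrix (Fin d) (Fin d) ℝ}

theorem givens_mul {i j : Fin d} {c s : ℝ} (hW : FirstColumnsUpperTriangular r W)
    (hi : r ≤ (i : ℕ)) (hij : i < j) : FirstColumnsUpperTriangular r (givens i j c s * W) := by
  intro t q hq hqt
  have hqi : q < i := by rw [Fin.lt_def]; omega
  by_cases hti : t = i
  · rw [hti, givens_mul_apply_left hij.ne, hW i q hq hqi, hW j q hq (hqi.trans hij)]
    ring
  by_cases htj : t = j
  · rw [htj, givens_mul_apply_right hij.ne, hW i q hq hqi, hW j q hq (hqi.trans hij)]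
    ring
  · rw [givens_mul_apply_of_ne hti htj, hW t q hq hqt]

theorem col_eq_zero_and_abs_diag_eq_one (hWo : Wᵀ * W = 1) (hW : FirstColumnsUpperTriangular r W)
    (q : Fin d) (hq : (q : ℕ) < r) : (∀ t, t ≠ q → W t q = 0) ∧ |W q q| = 1 := by
  have hcols (t q : Fin d) : ∑ k, W k t * W k q = if t = q then 1 else 0 := by
    simpa [mul_apply, one_apply] using congrFun (congrFun hWo t) q
  induction q using WellFoundedLT.induction with
  | ind q ih =>
    have hoff (t : Fin d) (htq : t ≠ q) : W t q = 0 := by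
      -- above the diagonal, use the orthogonality of column `q` to the earlier columns `± eₜ`
      rcases lt_or_gt_of_ne htq with hlt | hgt
      · obtain ⟨ht, hdiag⟩ := ih t hlt (lt_trans hlt hq)
        have : W t t * W t q = 0 := by
          rw [← Fintype.sum_eq_single (f := fun k => W k t * W k q) t fun k hk => by
            rw [ht k hk, zero_mul], hcols, if_neg htq]
        rcases abs_eq (zero_le_one' ℝ) |>.mp hdiag with h | h <;> simpa [h] using this
      · exact hW t q hq hgt
    refine ⟨hoff, ?_⟩
    have : W q q * W q q = 1 := by
      rw [← Fintype.sum_eq_single (f := fun k => W k q * W k q) q fun k hk => by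
        rw [hoff k hk, zero_mul], hcols, if_pos rfl]
    nlinarith [abs_mul_abs_self (W q q), abs_nonneg (W q q)]

end FirstColumnsUpperTriangular

section Triangularization

variable {d : ℕ}

theorem exists_isGivensProduct_clear_column (m : Fin d) {V : Matrix (Fin d) (Fin d) ℝ}
    (hV : FirstColumnsUpperTriangular m V) :
    ∀ k, (m : ℕ) + k < d → ∃ P W, IsGivensProduct k P ∧ V = P * W ∧
      FirstColumnsUpperTriangular m W ∧ ∀ t : Fin d, m < t → (t : ℕ) ≤ m + k → W t m = 0
  | 0, _ => ⟨1, V, .one, (one_mul V).symm, hV,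
      fun t hmt ht => absurd hmt (by rw [Fin.lt_def]; omega)⟩
  | k + 1, hk => by
    obtain ⟨P, W, hP, rfl, hW, hcol⟩ := exists_isGivensProduct_clear_column m hV k (by omega)
    set t₀ : Fin d := ⟨m + k + 1, hk⟩
    have hmt₀ : m < t₀ := by rw [Fin.lt_def]; simp [t₀]
    obtain ⟨c, s, hcs, hzero⟩ := exists_givens_mul_apply_eq_zero hmt₀.ne W
    have hG : (givens m t₀ c s)ᵀ * givens m t₀ c s = 1 := givens_transpose_mul_self hmt₀.ne hcs
    refine ⟨P * (givens m t₀ c s)ᵀ, givens m t₀ c s * W, hP.mul ?_, ?_, hW.givens_mul le_rfl hmt₀,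
      fun t hmt ht => ?_⟩
    · rw [givens_transpose hmt₀.ne]
      exact .of_isGivensRotation hmt₀ (isGivensRotation_givens hmt₀.ne (by rwa [neg_sq]))
    · rw [Matrix.mul_assoc, ← Matrix.mul_assoc _ _ W, hG, Matrix.one_mul]
    · by_cases htt₀ : t = t₀
      · rwa [htt₀]
      · rw [givens_mul_apply_of_ne hmt.ne' htt₀]
        exact hcol t hmt (by have : (t : ℕ) ≠ m + k + 1 := fun h => htt₀ (Fin.ext h); omega)

theorem exists_isGivensProduct_mul_firstColumnsUpperTriangular (V : Matrix (Fin d) (Fin d) ℝ) :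
    ∀ r ≤ d, ∃ P W, IsGivensProduct (∑ m ∈ Finset.range r, (d - 1 - m)) P ∧ V = P * W ∧
      FirstColumnsUpperTriangular r W
  | 0, _ => ⟨1, V, by simpa using .one, (one_mul V).symm, fun _ _ hq => absurd hq (by omega)⟩
  | r + 1, hr => by
    obtain ⟨P, W, hP, rfl, hW⟩ :=
      exists_isGivensProduct_mul_firstColumnsUpperTriangular V r (by omega)
    obtain ⟨Q, W', hQ, rfl, hW', hcol⟩ :=
      exists_isGivensProduct_clear_column ⟨r, hr⟩ hW (d - 1 - r) (by simp only; omega)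
    refine ⟨P * Q, W', by rw [Finset.sum_range_succ]; exact hP.mul hQ,
      (Matrix.mul_assoc _ _ _).symm, ?_⟩
    intro t q hq hqt
    rcases Nat.lt_succ_iff_lt_or_eq.mp hq with hq | hq
    · exact hW' t q hq hqt
    · obtain rfl : q = ⟨r, hr⟩ := Fin.ext hq
      exact hcol t hqt (by simp only; omega)

end Triangularization

section Frobenius

variable {d : ℕ}

theorem frobSq_eq_trace {m n : ℕ} (A : Matrix (Fin m) (Fin n) ℝ) : frobSq A = (Aᵀ * A).trace := by
  simp only [frobSq, trace, diag, mul_apply, transpose_apply, sq]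
  exact Finset.sum_comm

theorem frobSq_mul_of_transpose_mul_self {P A : Matrix (Fin d) (Fin d) ℝ} (hP : Pᵀ * P = 1) :
    frobSq (P * A) = frobSq A := by
  rw [frobSq_eq_trace, frobSq_eq_trace, transpose_mul, Matrix.mul_assoc, ← Matrix.mul_assoc Pᵀ, hP,
    Matrix.one_mul]

theorem frobSq_sub_of_transpose_mul_self {A B : Matrix (Fin d) (Fin d) ℝ} (hA : Aᵀ * A = 1)
    (hB : Bᵀ * B = 1) : frobSq (A - B) = 2 * d - 2 * (Aᵀ * B).trace := by
  have hBA : (Bᵀ * A).trace = (Aᵀ * B).trace := by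
    rw [← trace_transpose, transpose_mul, transpose_transpose]
  rw [frobSq_eq_trace, transpose_sub, sub_mul, mul_sub, mul_sub, hA, hB, trace_sub, trace_sub,
    trace_sub, hBA, trace_one, Fintype.card_fin]
  ring

/-- Take for `D` the signs of the diagonal of `W`, so that `tr (Wᵀ D) = ∑ |W t t| ≥ r`. -/
theorem exists_signed_diagonal_frobSq_sub_le {r : ℕ} {W : Matrix (Fin d) (Fin d) ℝ}
    (hWo : Wᵀ * W = 1) (hr : r ≤ d) (hW : FirstColumnsUpperTriangular r W) :
    ∃ D : Matrix (Fin d) (Fin d) ℝ, (∀ t, D t t = 1 ∨ D t t = -1) ∧ (∀ t q, t ≠ q → D t q = 0) ∧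
      frobSq (W - D) ≤ 2 * ((d : ℝ) - r) := by
  set σ : Fin d → ℝ := fun t => if 0 ≤ W t t then 1 else -1
  have hσ (t : Fin d) : σ t = 1 ∨ σ t = -1 := by by_cases h : 0 ≤ W t t <;> simp [σ, h]
  have hDo : (diagonal σ)ᵀ * diagonal σ = 1 := by
    rw [diagonal_transpose, diagonal_mul_diagonal, ← diagonal_one]
    congr 1
    ext t
    rcases hσ t with h | h <;> simp [h]
  have htrace : (Wᵀ * diagonal σ).trace = ∑ t, |W t t| := by
    refine Finset.sum_congr rfl fun t _ => ?_
    by_cases h : 0 ≤ W t t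
    · simp [σ, h, abs_of_nonneg h]
    · simp [σ, h, abs_of_neg (not_le.mp h)]
  have hcount : (r : ℝ) ≤ ∑ t, |W t t| := by
    calc (r : ℝ) = ∑ t : Fin d, if (t : ℕ) < r then 1 else 0 := by
          rw [Finset.sum_boole, Fin.card_filter_val_lt, min_eq_right hr]
      _ ≤ ∑ t, |W t t| := Finset.sum_le_sum fun t _ => by
          split_ifs with ht
          · exact (hW.col_eq_zero_and_abs_diag_eq_one hWo t ht).2.ge
          · exact abs_nonneg _
  refine ⟨diagonal σ, fun t => by simpa using hσ t, fun t q h => diagonal_apply_ne σ h, ?_⟩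
  rw [frobSq_sub_of_transpose_mul_self hWo hDo, htrace]
  linarith

end Frobenius

theorem sum_range_sub_one_sub {d r : ℕ} (hr : r ≤ d) :
    ∑ m ∈ Finset.range r, (d - 1 - m) = r * (2 * d - r - 1) / 2 := by
  induction r with
  | zero => simp
  | succ r ih =>
    obtain ⟨e, rfl⟩ := Nat.exists_eq_add_of_le hr
    rw [Finset.sum_range_succ, ih (by omega)]
    have h₁ : 2 * (r + 1 + e) - r - 1 = r + 1 + 2 * e := by omega
    have h₂ : 2 * (r + 1 + e) - (r + 1) - 1 = r + 2 * e := by omega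
    have h₃ : (r + 1) * (r + 2 * e) = r * (r + 1 + 2 * e) + 2 * e := by ring
    rw [h₁, h₂, h₃]
    omega

theorem stmt11_general {d : ℕ} (U : Matrix (Fin d) (Fin d) ℝ) (hU : Uᵀ * U = 1)
    (r : ℕ) (hrd : r ≤ d) :
    ∃ (J : Fin (r * (2 * d - r - 1) / 2) → Matrix (Fin d) (Fin d) ℝ)
      (D : Matrix (Fin d) (Fin d) ℝ),
      (∀ k, ∃ i j : Fin d, i < j ∧ IsGivensRotation i j (J k)) ∧
      (∀ t, D t t = 1 ∨ D t t = -1) ∧ (∀ t q, t ≠ q → D t q = 0) ∧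
      frobSq (U - (List.ofFn J).prod * D) ≤ 2 * ((d : ℝ) - r) := by
  obtain ⟨P, W, hP, rfl, hW⟩ := exists_isGivensProduct_mul_firstColumnsUpperTriangular U r hrd
  have hPo := hP.transpose_mul_self
  rw [sum_range_sub_one_sub hrd] at hP
  obtain ⟨J, hJ, rfl⟩ := hP
  have hWo : Wᵀ * W = 1 := by
    rwa [transpose_mul, Matrix.mul_assoc, ← Matrix.mul_assoc _ _ W, hPo, Matrix.one_mul] at hU
  obtain ⟨D, hD₁, hD₂, hD⟩ := exists_signed_diagonal_frobSq_sub_le hWo hrd hW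
  refine ⟨J, D, hJ, hD₁, hD₂, ?_⟩
  rwa [← Matrix.mul_sub, frobSq_mul_of_transpose_mul_self hPo]

/-- For real orthogonal `U` and `1 ≤ r ≤ d` there is a matrix `Ū`, a product of
`g = r(2d − r − 1)/2` Givens rotations and one diagonal matrix with entries `±1`,
such that `‖U − Ū‖_F² ≤ 2(d − r)`. -/
theorem stmt11 {d : ℕ} (U : Matrix (Fin d) (Fin d) ℝ) (hU : Uᵀ * U = 1)
    (r : ℕ) (hr1 : 1 ≤ r) (hrd : r ≤ d) :
    ∃ (J : Fin (r * (2 * d - r - 1) / 2) → Matrix (Fin d) (Fin d) ℝ)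
      (D : Matrix (Fin d) (Fin d) ℝ),
      (∀ k, ∃ i j : Fin d, i < j ∧ IsGivensRotation i j (J k)) ∧
      (∀ t, D t t = 1 ∨ D t t = -1) ∧ (∀ t q, t ≠ q → D t q = 0) ∧
      frobSq (U - (List.ofFn J).prod * D) ≤ 2 * ((d : ℝ) - r) :=
  stmt11_general U hU r hrd
end

section
/- (Theorem 4) Let U be a real orthogonal d×d matrix, let i < j, and let G be an extended orthogonal Givens transformation on (i,j) whose 2×2 block G̃ satisfies tr(G̃ᵀ U_{⟨i,j⟩}) = ‖U_{⟨i,j⟩}‖_*. If det(U_{⟨i,j⟩}) ≥ 0, then off(U Gᵀ)² ≤ off(U)² + ½·((U_ii − U_jj)² − (U_ij − U_ji)²); if det(U_{⟨i,j⟩}) < 0, then off(U Gᵀ)² ≤ off(U)² + ½·((U_ii + U_jj)² − (U_ij + U_ji)²). -/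
open Matrix

/- The Givens factor only mixes columns `i` and `j` of `U`, by an orthogonal 2×2 block, so it
preserves every row norm and changes only the diagonal entries at `i` and `j`; hence
`off(U Gᵀ)² − off(U)² = (U_ii² + U_jj²) − (V_ii² + V_jj²)` with `V = U Gᵀ`. The choice of `G̃`
makes `V_ii + V_jj = ‖U_{⟨i,j⟩}‖_*`, so `V_ii² + V_jj² ≥ ‖U_{⟨i,j⟩}‖_*² / 2`, and for a 2×2
matrix `‖A‖_*² = ‖A‖_F² + 2 |det A|` since the singular values have product `|det A|`. -/

lemma nuclearNorm_sq_of_fin_two (A : Matrix (Fin 2) (Fin 2) ℝ) :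
    nuclearNorm A ^ 2 = frobSq A + 2 * |A.det| := by
  have hA := isHermitian_conjTranspose_mul_self A
  have h0 := eigenvalues_conjTranspose_mul_self_nonneg A 0
  have h1 := eigenvalues_conjTranspose_mul_self_nonneg A 1
  have hsum : hA.eigenvalues 0 + hA.eigenvalues 1 = frobSq A := by
    have := hA.trace_eq_sum_eigenvalues
    simp only [Fin.sum_univ_two, RCLike.ofReal_real_eq_id, id, trace_fin_two, mul_apply,
      conjTranspose_apply, star_trivial] at this
    rw [← this, frobSq]
    simp only [Fin.sum_univ_two]
    ring
  have hprod : √(hA.eigenvalues 0) * √(hA.eigenvalues 1) = |A.det| := by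
    have := hA.det_eq_prod_eigenvalues
    simp only [Fin.prod_univ_two, RCLike.ofReal_real_eq_id, id, det_mul, det_conjTranspose,
      star_trivial] at this
    rw [← Real.sqrt_mul h0, ← this, ← Real.sqrt_sq_eq_abs, sq]
  rw [nuclearNorm, Fin.sum_univ_two]
  simp only [singVals]
  rw [add_sq, mul_assoc, hprod, Real.sq_sqrt h0, Real.sq_sqrt h1]
  linarith

lemma Fintype.sum_sub_sum_eq_of_eqOn_compl_pair {ι M : Type*} [Fintype ι] [AddCommGroup M]
    {f g : ι → M} {i j : ι} (hij : i ≠ j) (h : ∀ q, q ≠ i → q ≠ j → f q = g q) :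
    ∑ q, f q - ∑ q, g q = (f i + f j) - (g i + g j) := by
  rw [← Finset.sum_sub_distrib,
    Fintype.sum_eq_add i j hij fun q hq => sub_eq_zero.2 (h q hq.1 hq.2)]
  abel

lemma offSq_eq_frobSq_sub {d : ℕ} (M : Matrix (Fin d) (Fin d) ℝ) :
    offSq M = frobSq M - ∑ t, M t t ^ 2 := by
  simp only [offSq, frobSq, ← Finset.sum_sub_distrib]
  refine Finset.sum_congr rfl fun t _ => ?_
  rw [← Finset.sum_filter, Finset.filter_ne, Finset.sum_erase_eq_sub (Finset.mem_univ t)]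

lemma Matrix.mul_transpose_apply_eq_add_of_apply_eq_zero {l m n R : Type*} [Fintype n]
    [NonUnitalNonAssocSemiring R] (U : Matrix l n R) (G : Matrix m n R) {i j : n} {p : m}
    (hij : i ≠ j) (hG : ∀ k, k ≠ i → k ≠ j → G p k = 0) (t : l) :
    (U * Gᵀ) t p = U t i * G p i + U t j * G p j := by
  simp only [mul_apply, transpose_apply]
  exact Fintype.sum_eq_add i j hij fun k hk => by rw [hG k hk.1 hk.2, mul_zero]

lemma frobSq_sub2 {d : ℕ} (Z : Matrix (Fin d) (Fin d) ℝ) (i j : Fin d) :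
    frobSq (sub2 Z i j) = Z i i ^ 2 + Z i j ^ 2 + Z j i ^ 2 + Z j j ^ 2 := by
  simp only [frobSq, sub2, Fin.sum_univ_two, of_apply, cons_val', cons_val_zero, cons_val_one,
    empty_val', cons_val_fin_one]
  ring

lemma det_sub2 {d : ℕ} (Z : Matrix (Fin d) (Fin d) ℝ) (i j : Fin d) :
    (sub2 Z i j).det = Z i i * Z j j - Z i j * Z j i :=
  det_fin_two_of _ _ _ _

namespace IsExtGivens

variable {d : ℕ} {i j : Fin d} {G : Matrix (Fin d) (Fin d) ℝ}

lemma mul_transpose_apply_of_ne (hG : IsExtGivens i j G) (U : Matrix (Fin d) (Fin d) ℝ)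
    {q : Fin d} (hqi : q ≠ i) (hqj : q ≠ j) (t : Fin d) : (U * Gᵀ) t q = U t q := by
  have hrow : ∀ k, k ≠ q → G q k = 0 := fun k hkq =>
    hG.2.2 q k hkq.symm (fun h => hqi h.1) (fun h => hqj h.1)
  simp only [mul_apply, transpose_apply]
  rw [Fintype.sum_eq_single q fun k hkq => by rw [hrow k hkq, mul_zero], hG.2.1 q hqi hqj,
    mul_one]

lemma mul_transpose_apply_left (hG : IsExtGivens i j G) (U : Matrix (Fin d) (Fin d) ℝ)
    (hij : i ≠ j) (t : Fin d) : (U * Gᵀ) t i = U t i * G i i + U t j * G i j :=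
  U.mul_transpose_apply_eq_add_of_apply_eq_zero G hij
    (fun k hki hkj => hG.2.2 i k hki.symm (fun h => hkj h.2) (fun h => hij h.1)) t

lemma mul_transpose_apply_right (hG : IsExtGivens i j G) (U : Matrix (Fin d) (Fin d) ℝ)
    (hij : i ≠ j) (t : Fin d) : (U * Gᵀ) t j = U t i * G j i + U t j * G j j :=
  U.mul_transpose_apply_eq_add_of_apply_eq_zero G hij
    (fun k hki hkj => hG.2.2 j k hkj.symm (fun h => hij.symm h.1) (fun h => hki h.2)) t

lemma sq_add_sq_block (hG : IsExtGivens i j G) (a b : ℝ) :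
    (a * G i i + b * G i j) ^ 2 + (a * G j i + b * G j j) ^ 2 = a ^ 2 + b ^ 2 := by
  obtain ⟨⟨c, s, hcs, ⟨h1, h2, h3, h4⟩ | ⟨h1, h2, h3, h4⟩⟩, -⟩ := hG <;>
    rw [h1, h2, h3, h4] <;> linear_combination (a ^ 2 + b ^ 2) * hcs

lemma frobSq_mul_transpose (hG : IsExtGivens i j G) (U : Matrix (Fin d) (Fin d) ℝ)
    (hij : i ≠ j) : frobSq (U * Gᵀ) = frobSq U := by
  refine Finset.sum_congr rfl fun t _ => sub_eq_zero.1 ?_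
  rw [Fintype.sum_sub_sum_eq_of_eqOn_compl_pair hij fun q hqi hqj => by
      rw [hG.mul_transpose_apply_of_ne U hqi hqj],
    hG.mul_transpose_apply_left U hij, hG.mul_transpose_apply_right U hij, hG.sq_add_sq_block,
    sub_self]

lemma offSq_mul_transpose (hG : IsExtGivens i j G) (U : Matrix (Fin d) (Fin d) ℝ)
    (hij : i ≠ j) : offSq (U * Gᵀ) =
      offSq U + (U i i ^ 2 + U j j ^ 2) - ((U * Gᵀ) i i ^ 2 + (U * Gᵀ) j j ^ 2) := by
  have hdiag := Fintype.sum_sub_sum_eq_of_eqOn_compl_pair (f := fun t => (U * Gᵀ) t t ^ 2)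
    (g := fun t => U t t ^ 2) hij fun q hqi hqj => by
      simp only [hG.mul_transpose_apply_of_ne U hqi hqj]
  rw [offSq_eq_frobSq_sub, offSq_eq_frobSq_sub, hG.frobSq_mul_transpose U hij]
  linear_combination -hdiag

lemma trace_sub2_mul_transpose (hG : IsExtGivens i j G) (U : Matrix (Fin d) (Fin d) ℝ)
    (hij : i ≠ j) : (sub2 (U * Gᵀ) i j).trace = ((sub2 G i j)ᵀ * sub2 U i j).trace := by
  rw [trace_fin_two, trace_fin_two]
  simp only [sub2, of_apply, cons_val', cons_val_zero, cons_val_one, empty_val',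
    cons_val_fin_one, hG.mul_transpose_apply_left U hij, hG.mul_transpose_apply_right U hij,
    mul_apply, transpose_apply, Fin.sum_univ_two]
  ring

end IsExtGivens

theorem stmt13_general {d : ℕ} (U G : Matrix (Fin d) (Fin d) ℝ)
    (i j : Fin d) (hij : i < j) (hG : IsExtGivens i j G)
    (hopt : ((sub2 G i j)ᵀ * sub2 U i j).trace = nuclearNorm (sub2 U i j)) :
    (0 ≤ (sub2 U i j).det →
      offSq (U * Gᵀ) ≤
        offSq U + (1 / 2) * ((U i i - U j j) ^ 2 - (U i j - U j i) ^ 2)) ∧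
    ((sub2 U i j).det < 0 →
      offSq (U * Gᵀ) ≤
        offSq U + (1 / 2) * ((U i i + U j j) ^ 2 - (U i j + U j i) ^ 2)) := by
  have hdiag : (U * Gᵀ) i i + (U * Gᵀ) j j = nuclearNorm (sub2 U i j) := by
    rw [← hopt, ← hG.trace_sub2_mul_transpose U hij.ne, trace_fin_two]
    rfl
  have hoff := hG.offSq_mul_transpose U hij.ne
  have hnuc := nuclearNorm_sq_of_fin_two (sub2 U i j)
  rw [frobSq_sub2] at hnuc
  set V := U * Gᵀ
  have hmean : nuclearNorm (sub2 U i j) ^ 2 ≤ 2 * (V i i ^ 2 + V j j ^ 2) := by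
    rw [← hdiag]; linarith [sq_nonneg (V i i - V j j)]
  refine ⟨fun hpos => ?_, fun hneg => ?_⟩
  · rw [abs_of_nonneg hpos, det_sub2] at hnuc
    linarith
  · rw [abs_of_neg hneg, det_sub2] at hnuc
    linarith

/-- Theorem 4: if `U` is real orthogonal and `G` is an extended orthogonal Givens
transformation on `(i,j)` whose block `G̃` satisfies `tr(G̃ᵀ U_{⟨i,j⟩}) = ‖U_{⟨i,j⟩}‖_*`,
then `off(U Gᵀ)² ≤ off(U)² + ½((U_ii − U_jj)² − (U_ij − U_ji)²)` when
`det U_{⟨i,j⟩} ≥ 0`, and `off(U Gᵀ)² ≤ off(U)² + ½((U_ii + U_jj)² − (U_ij + U_ji)²)`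
when `det U_{⟨i,j⟩} < 0`. -/
theorem stmt13 {d : ℕ} (U G : Matrix (Fin d) (Fin d) ℝ) (hU : Uᵀ * U = 1)
    (i j : Fin d) (hij : i < j) (hG : IsExtGivens i j G)
    (hopt : ((sub2 G i j)ᵀ * sub2 U i j).trace = nuclearNorm (sub2 U i j)) :
    (0 ≤ (sub2 U i j).det →
      offSq (U * Gᵀ) ≤
        offSq U + (1 / 2) * ((U i i - U j j) ^ 2 - (U i j - U j i) ^ 2)) ∧
    ((sub2 U i j).det < 0 →
      offSq (U * Gᵀ) ≤
        offSq U + (1 / 2) * ((U i i + U j j) ^ 2 - (U i j + U j i) ^ 2)) :=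
  stmt13_general U G i j hij hG hopt
end
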